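/- arXiv:2305.07885 — 3 statements merged into one kernel-verified Lean document; each statement's English description precedes it below -/
import Mathlib

section
/- For every symmetric 3-tensor T on ℝ^p it holds E[(T(γ) − 3⟨M,γ⟩)²] = 6‖T‖_Fr², where γ is a standard Gaussian vector and ⟨·,·⟩ is the Euclidean inner product on ℝ^p. -/
/-!
`F = T(γ) - 3⟨M, γ⟩` is the Wick-ordered cubic form of `T`: an eigenvector, with eigenvalue 3, of
the Ornstein–Uhlenbeck operator `x · ∇ - Δ`, whose partial derivatives `∂ᵢF = 3 (Tᵢ(γ) - tr Tᵢ)`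
are Wick-ordered quadratic forms, eigenvectors with eigenvalue 2. Gaussian integration by parts,
`E[γᵢ P] = E[∂ᵢP]`, gives `E[(x · ∇ - Δ) P · Q] = ∑ᵢ E[∂ᵢP ∂ᵢQ]`, so an eigenvector `P` with
eigenvalue `n` satisfies `n E[P²] = ∑ᵢ E[(∂ᵢP)²]`. Used in degrees 3, 2 and 1 this gives
`E[F²] = 3 ∑ᵢ E[(Tᵢ(γ) - tr Tᵢ)²] = 6 ∑ᵢ ∑ⱼ E[⟨Tᵢⱼ, γ⟩²] = 6 ‖T‖²`.
-/

open MeasureTheory ProbabilityTheory Finset Real MvPolynomial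

lemma hasDerivAt_gaussianPDFReal_zero_one (x : ℝ) :
    HasDerivAt (gaussianPDFReal 0 1) (-x * gaussianPDFReal 0 1 x) x := by
  have h : gaussianPDFReal 0 1 = fun x => (√(2 * π))⁻¹ * rexp (-x ^ 2 / 2) := by
    ext x; simp [gaussianPDFReal]
  rw [h]
  refine ((((hasDerivAt_pow 2 x).fun_neg.div_const 2).exp).const_mul _).congr_deriv ?_
  push_cast; ring

lemma integrable_gaussianPDFReal_mul_iff {μ : ℝ} {v : NNReal} (hv : v ≠ 0) {f : ℝ → ℝ} :
    Integrable (fun x => gaussianPDFReal μ v x * f x) ↔ Integrable f (gaussianReal μ v) := by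
  rw [gaussianReal_of_var_ne_zero μ hv,
    integrable_withDensity_iff_integrable_smul' (measurable_gaussianPDF μ v)
      (ae_of_all _ fun _ => gaussianPDF_lt_top)]
  simp [gaussianPDF, ENNReal.toReal_ofReal (gaussianPDFReal_nonneg _ _ _)]

lemma integrable_pow_gaussianReal (μ : ℝ) (v : NNReal) (n : ℕ) :
    Integrable (fun x : ℝ => x ^ n) (gaussianReal μ v) :=
  integrable_pow_of_mem_interior_integrableExpSet (X := id)
    (by simp [integrableExpSet_id_gaussianReal]) n

lemma integral_pow_succ_gaussianReal (n : ℕ) :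
    ∫ x, x ^ (n + 1) ∂gaussianReal 0 1 = n * ∫ x, x ^ (n - 1) ∂gaussianReal 0 1 := by
  rcases n with _ | k
  · simp [integral_id_gaussianReal]
  set φ := gaussianPDFReal 0 1
  have hint : ∀ m : ℕ, Integrable (fun x => φ x * x ^ m) :=
    fun m => (integrable_gaussianPDFReal_mul_iff one_ne_zero).2 (integrable_pow_gaussianReal 0 1 m)
  have hderiv : ∀ x, HasDerivAt (fun x => φ x * x ^ (k + 1))
      ((k + 1) * (φ x * x ^ k) - φ x * x ^ (k + 2)) x := fun x =>
    ((hasDerivAt_gaussianPDFReal_zero_one x).fun_mul (hasDerivAt_pow (k + 1) x)).congr_deriv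
      (by push_cast; ring)
  have := integral_eq_zero_of_hasDerivAt_of_integrable hderiv
    (((hint k).const_mul _).sub (hint (k + 2))) (hint (k + 1))
  rw [integral_sub ((hint k).const_mul _) (hint (k + 2)), integral_const_mul] at this
  simp only [integral_gaussianReal_eq_integral_smul one_ne_zero, smul_eq_mul,
    add_tsub_cancel_right]
  push_cast
  linarith

section

variable {ι : Type*}

def IsSymmTensor (T : ι → ι → ι → ℝ) : Prop :=
  ∀ i j k, T i j k = T j i k ∧ T i j k = T i k j

lemma IsSymmTensor.isSymm_apply {T : ι → ι → ι → ℝ} (hT : IsSymmTensor T) (i : ι) :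
    Matrix.IsSymm (T i) :=
  Matrix.IsSymm.ext fun j k => (hT i j k).2.symm

variable [Fintype ι]

variable (ι) in
noncomputable abbrev stdGaussian : Measure (ι → ℝ) :=
  Measure.pi fun _ : ι => gaussianReal 0 1

lemma eval_monomial_eq_prod (γ : ι → ℝ) (c : ι →₀ ℕ) (a : ℝ) :
    eval γ (monomial c a) = a * ∏ s, γ s ^ c s := by
  rw [eval_monomial, Finsupp.prod_fintype _ _ fun _ => pow_zero _]

lemma integrable_eval_stdGaussian (P : MvPolynomial ι ℝ) :
    Integrable (fun γ => eval γ P) (stdGaussian ι) := by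
  induction P using MvPolynomial.induction_on' with
  | monomial c a =>
    simp only [eval_monomial_eq_prod]
    exact (Integrable.fintype_prod fun s => integrable_pow_gaussianReal 0 1 (c s)).const_mul a
  | add P Q hP hQ =>
    simp only [map_add]
    exact hP.add hQ

variable (ι) in
noncomputable def gaussianExpectation : MvPolynomial ι ℝ →ₗ[ℝ] ℝ where
  toFun P := ∫ γ, eval γ P ∂stdGaussian ι
  map_add' P Q := by
    simp only [map_add]
    exact integral_add (integrable_eval_stdGaussian P) (integrable_eval_stdGaussian Q)
  map_smul' a P := by simp [smul_eval, integral_const_mul]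

lemma gaussianExpectation_apply (P : MvPolynomial ι ℝ) :
    gaussianExpectation ι P = ∫ γ, eval γ P ∂stdGaussian ι := rfl

lemma gaussianExpectation_C (a : ℝ) : gaussianExpectation ι (C a : MvPolynomial ι ℝ) = a := by
  simp [gaussianExpectation_apply]

lemma gaussianExpectation_monomial (c : ι →₀ ℕ) (a : ℝ) :
    gaussianExpectation ι (monomial c a) = a * ∏ s, ∫ x, x ^ c s ∂gaussianReal 0 1 := by
  simp only [gaussianExpectation_apply, eval_monomial_eq_prod, integral_const_mul,
    integral_fintype_prod_eq_prod (fun s (x : ℝ) => x ^ c s)]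

lemma gaussianExpectation_X_mul (i : ι) (P : MvPolynomial ι ℝ) :
    gaussianExpectation ι (X i * P) = gaussianExpectation ι (pderiv i P) := by
  classical
  induction P using MvPolynomial.induction_on' with
  | monomial c a =>
    rw [X, monomial_mul, pderiv_monomial, gaussianExpectation_monomial,
      gaussianExpectation_monomial, one_mul, ← mul_prod_erase _ _ (mem_univ i),
      ← mul_prod_erase _ _ (mem_univ i)]
    have hrest : ∀ s ∈ univ.erase i,
        (Finsupp.single i 1 + c : ι →₀ ℕ) s = (c - Finsupp.single i 1 : ι →₀ ℕ) s :=
      fun s hs => by simp [Ne.symm (ne_of_mem_erase hs)]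
    rw [prod_congr rfl fun s hs => by rw [hrest s hs]]
    simp only [Finsupp.add_apply, Finsupp.tsub_apply, Finsupp.single_eq_same]
    rw [add_comm 1, integral_pow_succ_gaussianReal]
    ring
  | add P Q hP hQ => simp only [mul_add, map_add, hP, hQ]

noncomputable def ornsteinUhlenbeck (P : MvPolynomial ι ℝ) : MvPolynomial ι ℝ :=
  ∑ i, X i * pderiv i P - ∑ i, pderiv i (pderiv i P)

lemma gaussianExpectation_ornsteinUhlenbeck_mul (P Q : MvPolynomial ι ℝ) :
    gaussianExpectation ι (ornsteinUhlenbeck P * Q)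
      = ∑ i, gaussianExpectation ι (pderiv i P * pderiv i Q) := by
  simp only [ornsteinUhlenbeck, sub_mul, sum_mul, map_sub, map_sum, mul_assoc,
    gaussianExpectation_X_mul, Derivation.leibniz, smul_eq_mul, map_add, ← sum_sub_distrib]
  exact sum_congr rfl fun i _ => by rw [mul_comm Q]; ring

lemma gaussianExpectation_mul_self_of_ornsteinUhlenbeck_eq_smul {P : MvPolynomial ι ℝ} {c : ℝ}
    (h : ornsteinUhlenbeck P = c • P) :
    c * gaussianExpectation ι (P * P) = ∑ i, gaussianExpectation ι (pderiv i P * pderiv i P) := by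
  rw [← gaussianExpectation_ornsteinUhlenbeck_mul, h, smul_mul_assoc, map_smul, smul_eq_mul]

noncomputable def linearForm (v : ι → ℝ) : MvPolynomial ι ℝ := ∑ i, C (v i) * X i

noncomputable def quadraticForm (A : Matrix ι ι ℝ) : MvPolynomial ι ℝ :=
  ∑ i, ∑ j, C (A i j) * X i * X j

noncomputable def cubicForm (T : ι → ι → ι → ℝ) : MvPolynomial ι ℝ :=
  ∑ i, ∑ j, ∑ k, C (T i j k) * X i * X j * X k

lemma sum_X_mul_C (v : ι → ℝ) : ∑ i, X i * C (v i) = linearForm v :=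
  sum_congr rfl fun _ _ => mul_comm _ _

lemma sum_linearForm (v : ι → ι → ℝ) : ∑ i, linearForm (v i) = linearForm (∑ i, v i) := by
  simp only [linearForm, Finset.sum_apply, map_sum, sum_mul]
  exact sum_comm

lemma quadraticForm_eq_sum_X_mul (A : Matrix ι ι ℝ) :
    quadraticForm A = ∑ i, X i * linearForm (A i) := by
  simp only [quadraticForm, linearForm, mul_sum]
  exact sum_congr rfl fun _ _ => sum_congr rfl fun _ _ => by ring

lemma cubicForm_eq_sum_X_mul (T : ι → ι → ι → ℝ) :
    cubicForm T = ∑ i, X i * quadraticForm (T i) := by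
  simp only [cubicForm, quadraticForm, mul_sum]
  exact sum_congr rfl fun _ _ => sum_congr rfl fun _ _ => sum_congr rfl fun _ _ => by ring

lemma pderiv_sum_X_mul (f : ι → MvPolynomial ι ℝ) (l : ι) :
    pderiv l (∑ i, X i * f i) = f l + ∑ i, X i * pderiv l (f i) := by
  classical
  simp [Derivation.leibniz, pderiv_X, Pi.single_apply, sum_add_distrib, add_comm]

lemma pderiv_linearForm (v : ι → ℝ) (l : ι) : pderiv l (linearForm v) = C (v l) := by
  rw [← sum_X_mul_C, pderiv_sum_X_mul]
  simp

lemma pderiv_quadraticForm {A : Matrix ι ι ℝ} (hA : A.IsSymm) (l : ι) :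
    pderiv l (quadraticForm A) = (2 : ℝ) • linearForm (A l) := by
  simp only [quadraticForm_eq_sum_X_mul, pderiv_sum_X_mul, pderiv_linearForm, hA.apply,
    sum_X_mul_C]
  rw [two_smul]

lemma pderiv_cubicForm {T : ι → ι → ι → ℝ} (hT : IsSymmTensor T) (l : ι) :
    pderiv l (cubicForm T) = (3 : ℝ) • quadraticForm (T l) := by
  have hswap : ∀ i, T i l = T l i := fun i => funext fun k => (hT i l k).1
  simp only [cubicForm_eq_sum_X_mul, pderiv_sum_X_mul, pderiv_quadraticForm (hT.isSymm_apply _),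
    hswap, mul_smul_comm, ← smul_sum]
  rw [← quadraticForm_eq_sum_X_mul (T l)]
  module

noncomputable def wickQuadraticForm (A : Matrix ι ι ℝ) : MvPolynomial ι ℝ :=
  quadraticForm A - C A.trace

noncomputable def wickCubicForm (T : ι → ι → ι → ℝ) : MvPolynomial ι ℝ :=
  cubicForm T - (3 : ℝ) • linearForm fun i => Matrix.trace (T i)

lemma pderiv_wickQuadraticForm {A : Matrix ι ι ℝ} (hA : A.IsSymm) (l : ι) :
    pderiv l (wickQuadraticForm A) = (2 : ℝ) • linearForm (A l) := by
  rw [wickQuadraticForm, map_sub, pderiv_quadraticForm hA, pderiv_C, sub_zero]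

lemma pderiv_wickCubicForm {T : ι → ι → ι → ℝ}
    (hT : IsSymmTensor T) (l : ι) :
    pderiv l (wickCubicForm T) = (3 : ℝ) • wickQuadraticForm (T l) := by
  rw [wickCubicForm, map_sub, Derivation.map_smul, pderiv_cubicForm hT, pderiv_linearForm,
    ← smul_sub]
  rfl

lemma ornsteinUhlenbeck_linearForm (v : ι → ℝ) :
    ornsteinUhlenbeck (linearForm v) = linearForm v := by
  simp [ornsteinUhlenbeck, pderiv_linearForm, sum_X_mul_C]

lemma ornsteinUhlenbeck_wickQuadraticForm {A : Matrix ι ι ℝ} (hA : A.IsSymm) :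
    ornsteinUhlenbeck (wickQuadraticForm A) = (2 : ℝ) • wickQuadraticForm A := by
  simp only [ornsteinUhlenbeck, pderiv_wickQuadraticForm hA, Derivation.map_smul,
    pderiv_linearForm, mul_smul_comm, ← smul_sum, ← quadraticForm_eq_sum_X_mul, ← map_sum]
  rw [wickQuadraticForm, smul_sub]
  rfl

lemma ornsteinUhlenbeck_wickCubicForm {T : ι → ι → ι → ℝ}
    (hT : IsSymmTensor T) :
    ornsteinUhlenbeck (wickCubicForm T) = (3 : ℝ) • wickCubicForm T := by
  have htrace : ∑ l, T l l = fun k => Matrix.trace (T k) := by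
    ext k
    simp only [Finset.sum_apply, Matrix.trace, Matrix.diag]
    exact sum_congr rfl fun l _ => ((hT l l k).2.trans (hT l k l).1)
  simp only [ornsteinUhlenbeck, pderiv_wickCubicForm hT, Derivation.map_smul,
    pderiv_wickQuadraticForm (hT.isSymm_apply _), mul_smul_comm,
    ← smul_sum]
  simp only [wickQuadraticForm, mul_sub, sum_sub_distrib, ← cubicForm_eq_sum_X_mul, sum_X_mul_C,
    sum_linearForm, htrace, wickCubicForm]
  module

lemma gaussianExpectation_linearForm_mul_self (v : ι → ℝ) :
    gaussianExpectation ι (linearForm v * linearForm v) = ∑ i, v i ^ 2 := by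
  have h := gaussianExpectation_mul_self_of_ornsteinUhlenbeck_eq_smul (c := 1) (P := linearForm v)
    (by rw [ornsteinUhlenbeck_linearForm, one_smul])
  simp only [pderiv_linearForm, ← C_mul, gaussianExpectation_C, one_mul] at h
  simpa only [sq] using h

lemma gaussianExpectation_wickQuadraticForm_mul_self {A : Matrix ι ι ℝ} (hA : A.IsSymm) :
    gaussianExpectation ι (wickQuadraticForm A * wickQuadraticForm A)
      = 2 * ∑ i, ∑ j, A i j ^ 2 := by
  have h := gaussianExpectation_mul_self_of_ornsteinUhlenbeck_eq_smul
    (ornsteinUhlenbeck_wickQuadraticForm hA)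
  simp only [pderiv_wickQuadraticForm hA, smul_mul_smul, map_smul, smul_eq_mul,
    gaussianExpectation_linearForm_mul_self, ← mul_sum] at h
  linarith

lemma gaussianExpectation_wickCubicForm_mul_self {T : ι → ι → ι → ℝ}
    (hT : IsSymmTensor T) :
    gaussianExpectation ι (wickCubicForm T * wickCubicForm T)
      = 6 * ∑ i, ∑ j, ∑ k, T i j k ^ 2 := by
  have h := gaussianExpectation_mul_self_of_ornsteinUhlenbeck_eq_smul
    (ornsteinUhlenbeck_wickCubicForm hT)
  simp only [pderiv_wickCubicForm hT, smul_mul_smul, map_smul, smul_eq_mul,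
    gaussianExpectation_wickQuadraticForm_mul_self
      (hT.isSymm_apply _), ← mul_sum] at h
  linarith

end

/-- For every symmetric 3-tensor `T` on `ℝ^p`,
`E[(T(γ) − 3⟨M,γ⟩)²] = 6‖T‖_Fr²` where `γ` is a standard Gaussian vector,
`M i = tr(T_i) = ∑ j, T i j j` and `‖T‖_Fr² = ∑ i j k, (T i j k)²`. -/
theorem gaussian_tensor_centered_second_moment
    (p : ℕ) (T : Fin p → Fin p → Fin p → ℝ)
    (hsym : ∀ i j k, T i j k = T j i k ∧ T i j k = T i k j) :
    ∫ γ : Fin p → ℝ,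
        ((∑ i, ∑ j, ∑ k, T i j k * γ i * γ j * γ k)
            - 3 * ∑ i, (∑ j, T i j j) * γ i) ^ 2
        ∂(Measure.pi fun _ : Fin p => gaussianReal 0 1)
      = 6 * ∑ i, ∑ j, ∑ k, (T i j k) ^ 2 := by
  have heval : ∀ γ : Fin p → ℝ, eval γ (wickCubicForm T)
      = (∑ i, ∑ j, ∑ k, T i j k * γ i * γ j * γ k) - 3 * ∑ i, (∑ j, T i j j) * γ i := fun γ => by
    simp [wickCubicForm, cubicForm, linearForm, Matrix.trace, Matrix.diag]
  rw [← gaussianExpectation_wickCubicForm_mul_self hsym, gaussianExpectation_apply]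
  simp only [map_mul, heval, sq]
end

section
/- Suppose the symmetric 3-tensor T satisfies condition (Γ). Then for all u₁, u₂, u₃ ∈ ℝ^p it holds |∑_{i,j,k=1}^p T_{i,j,k} (u₁)_i (u₂)_j (u₃)_k| ≤ τ ‖Γu₁‖ ‖Γu₂‖ ‖Γu₃‖. -/
open Matrix Finset

/-- Euclidean norm on `ℝ^p`. -/
noncomputable def euclNorm {p : ℕ} (v : Fin p → ℝ) : ℝ := Real.sqrt (∑ i, v i ^ 2)

/-!
Write `B` for the trilinear form of `T` and `A` for `Γ`. If `A x = 0`, the cubic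
`t ↦ B(y + t x, y + t x, y + t x)` is bounded by `τ ‖A y‖³`, so its linear coefficient
`3 B(y, y, x)` vanishes, and by polarization `x` drops out of `B` altogether.

For `A`-orthonormal `x, e`, the cubic form on the circle `u_θ = cos θ x + sin θ e` is a
trigonometric polynomial with frequencies 1 and 3 only. Averaging it over the nodes `θ + 2πk/3`,
`k = 0, 1, 2`, with the weights `w = ((1 + 2 cos 2·) / 3)²`, which are nonnegative and sum to 1,
returns exactly `B(x, x, u_{3θ})`. Hence `|B(x, x, y)| ≤ τ ‖A x‖² ‖A y‖`, and polarizing in the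
first two arguments, together with the parallelogram law, gives the bound in all three.
-/

open Real InnerProductSpace

theorem eq_zero_of_forall_abs_mul_le {k M : ℝ} (h : ∀ t, |t * k| ≤ M) : k = 0 := by
  by_contra hk
  have := h ((M + 1) / k)
  rw [div_mul_cancel₀ _ hk] at this
  linarith [le_abs_self (M + 1)]

theorem exists_cos_sin_eq {s t : ℝ} (h : s ^ 2 + t ^ 2 = 1) : ∃ φ, cos φ = s ∧ sin φ = t := by
  set z : ℂ := ⟨s, t⟩
  have hz : ‖z‖ = 1 := by
    rw [Complex.norm_def, Complex.normSq_mk, ← sq, ← sq, h, sqrt_one]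
  refine ⟨z.arg, ?_, ?_⟩
  · rw [Complex.cos_arg (norm_ne_zero_iff.mp (hz ▸ one_ne_zero)), hz, div_one]
  · rw [Complex.sin_arg, hz, div_one]

def binaryCubic (a b c d u v : ℝ) : ℝ :=
  a * u ^ 3 + 3 * b * u ^ 2 * v + 3 * c * u * v ^ 2 + d * v ^ 3

noncomputable def cubicNodeWeight (θ : ℝ) : ℝ := ((1 + 2 * cos (2 * θ)) / 3) ^ 2

theorem cos_sin_two_pi_mul_div_three :
    cos (2 * π / 3) = -1 / 2 ∧ sin (2 * π / 3) = √3 / 2 ∧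
      cos (2 * π * 2 / 3) = -1 / 2 ∧ sin (2 * π * 2 / 3) = -(√3 / 2) := by
  rw [show 2 * π / 3 = π - π / 3 by ring, show 2 * π * 2 / 3 = π / 3 + π by ring,
    cos_pi_sub, sin_pi_sub, cos_add_pi, sin_add_pi, cos_pi_div_three, sin_pi_div_three]
  norm_num

theorem sum_cubicNodeWeight (θ : ℝ) :
    ∑ k : Fin 3, cubicNodeWeight (θ + 2 * π * k / 3) = 1 := by
  obtain ⟨hc₁, hs₁, hc₂, hs₂⟩ := cos_sin_two_pi_mul_div_three
  have := sin_sq_add_cos_sq θ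
  have := sq_sqrt (show (0 : ℝ) ≤ 3 by norm_num)
  simp only [cubicNodeWeight, Fin.sum_univ_three, Fin.val_zero, Fin.val_one, Fin.val_two,
    Nat.cast_zero, Nat.cast_one, Nat.cast_ofNat, mul_zero, zero_div, mul_one, cos_zero, sin_zero,
    cos_two_mul, cos_add, hc₁, hs₁, hc₂, hs₂]
  grind

theorem sum_cubicNodeWeight_mul_binaryCubic (a b c d θ : ℝ) :
    ∑ k : Fin 3, cubicNodeWeight (θ + 2 * π * k / 3) *
        binaryCubic a b c d (cos (θ + 2 * π * k / 3)) (sin (θ + 2 * π * k / 3)) =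
      a * cos (3 * θ) + b * sin (3 * θ) := by
  obtain ⟨hc₁, hs₁, hc₂, hs₂⟩ := cos_sin_two_pi_mul_div_three
  have := sin_sq_add_cos_sq θ
  have := sq_sqrt (show (0 : ℝ) ≤ 3 by norm_num)
  simp only [cubicNodeWeight, binaryCubic, Fin.sum_univ_three, Fin.val_zero, Fin.val_one,
    Fin.val_two, Nat.cast_zero, Nat.cast_one, Nat.cast_ofNat, mul_zero, zero_div, add_zero,
    mul_one, cos_zero, sin_zero, cos_two_mul, cos_add, sin_add, hc₁, hs₁, hc₂, hs₂, cos_three_mul,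
    sin_three_mul]
  grind

theorem abs_add_le_of_abs_binaryCubic_le {a b c d τ : ℝ}
    (h : ∀ u v : ℝ, u ^ 2 + v ^ 2 = 1 → |binaryCubic a b c d u v| ≤ τ)
    {s t : ℝ} (hst : s ^ 2 + t ^ 2 = 1) : |a * s + b * t| ≤ τ := by
  obtain ⟨φ, rfl, rfl⟩ := exists_cos_sin_eq hst
  have hw : ∀ θ, 0 ≤ cubicNodeWeight θ := fun θ => sq_nonneg _
  calc |a * cos φ + b * sin φ|
      = |∑ k : Fin 3, cubicNodeWeight (φ / 3 + 2 * π * k / 3) *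
          binaryCubic a b c d (cos (φ / 3 + 2 * π * k / 3)) (sin (φ / 3 + 2 * π * k / 3))| := by
        rw [sum_cubicNodeWeight_mul_binaryCubic, mul_div_cancel₀ φ three_ne_zero]
    _ ≤ ∑ k : Fin 3, cubicNodeWeight (φ / 3 + 2 * π * k / 3) * τ := by
        refine (abs_sum_le_sum_abs _ _).trans (sum_le_sum fun k _ => ?_)
        rw [abs_mul, abs_of_nonneg (hw _)]
        exact mul_le_mul_of_nonneg_left (h _ _ (cos_sq_add_sin_sq _)) (hw _)
    _ = τ := by rw [← sum_mul, sum_cubicNodeWeight, one_mul]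

theorem norm_smul_add_smul_eq_one {E : Type*} [NormedAddCommGroup E] [InnerProductSpace ℝ E]
    {a b : E} (ha : ‖a‖ = 1) (hb : ‖b‖ = 1) (hab : ⟪a, b⟫_ℝ = 0) {u v : ℝ}
    (huv : u ^ 2 + v ^ 2 = 1) : ‖u • a + v • b‖ = 1 := by
  have h : ‖u • a + v • b‖ ^ 2 = 1 := by
    rw [norm_add_sq_real, norm_smul, norm_smul, inner_smul_left, inner_smul_right, hab, ha, hb,
      Real.norm_eq_abs, Real.norm_eq_abs, mul_pow, mul_pow, sq_abs, sq_abs]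
    simpa using huv
  rwa [pow_eq_one_iff_of_nonneg (norm_nonneg _) two_ne_zero] at h

section Trilinear

variable {V E : Type*} [AddCommGroup V] [Module ℝ V] [NormedAddCommGroup E]
  [InnerProductSpace ℝ E] {B : V →ₗ[ℝ] V →ₗ[ℝ] V →ₗ[ℝ] ℝ}

theorem trilinear_apply_smul_add_smul_self (h₁₂ : ∀ x y z, B x y z = B y x z) (α β : ℝ)
    (x y z : V) :
    B (α • x + β • y) (α • x + β • y) z =
      α ^ 2 * B x x z + 2 * α * β * B x y z + β ^ 2 * B y y z := by
  simp only [map_add, map_smul, LinearMap.add_apply, LinearMap.smul_apply, smul_eq_mul,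
    h₁₂ y x z]
  ring

theorem trilinear_apply_smul_add_smul_cube (h₁₂ : ∀ x y z, B x y z = B y x z)
    (h₂₃ : ∀ x y z, B x y z = B x z y) (u v : ℝ) (x y : V) :
    B (u • x + v • y) (u • x + v • y) (u • x + v • y) =
      binaryCubic (B x x x) (B x x y) (B x y y) (B y y y) u v := by
  rw [map_add (B _ _), map_smul, map_smul, trilinear_apply_smul_add_smul_self h₁₂,
    trilinear_apply_smul_add_smul_self h₁₂, h₂₃ x y x, h₂₃ y y x, h₁₂ y x y, binaryCubic]
  simp only [smul_eq_mul]
  ring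

variable {A : V →ₗ[ℝ] E} {τ : ℝ}

theorem trilinear_apply_eq_zero_of_map_eq_zero (h₁₂ : ∀ x y z, B x y z = B y x z)
    (h₂₃ : ∀ x y z, B x y z = B x z y) (hB : ∀ u, |B u u u| ≤ τ * ‖A u‖ ^ 3) {x : V}
    (hx : A x = 0) (y z : V) : B x y z = 0 := by
  have hyyx : ∀ y, B y y x = 0 := by
    intro y
    set P := fun t => binaryCubic (B y y y) (B y y x) (B y x x) (B x x x) 1 t
    have hP : ∀ t, |P t| ≤ τ * ‖A y‖ ^ 3 := fun t => by
      simpa [P, ← trilinear_apply_smul_add_smul_cube h₁₂ h₂₃, hx] using hB (y + t • x)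
    have hdiff : ∀ t, 8 * (P t - P (-t)) - (P (2 * t) - P (-(2 * t))) = t * (36 * B y y x) :=
      fun t => by simp only [P, binaryCubic]; ring
    refine (mul_eq_zero_iff_left (by norm_num : (36 : ℝ) ≠ 0)).mp
      (eq_zero_of_forall_abs_mul_le (M := 18 * (τ * ‖A y‖ ^ 3)) fun t => ?_)
    calc |t * (36 * B y y x)|
        = |8 * (P t - P (-t)) - (P (2 * t) - P (-(2 * t)))| := by rw [hdiff]
      _ ≤ |8 * (P t - P (-t))| + |P (2 * t) - P (-(2 * t))| := abs_sub _ _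
      _ ≤ 8 * (|P t| + |P (-t)|) + (|P (2 * t)| + |P (-(2 * t))|) := by
          rw [abs_mul, abs_of_pos (by norm_num : (0 : ℝ) < 8)]
          gcongr <;> exact abs_sub _ _
      _ ≤ 18 * (τ * ‖A y‖ ^ 3) := by linarith [hP t, hP (-t), hP (2 * t), hP (-(2 * t))]
  have hyzx : B y z x = 0 := by
    have := trilinear_apply_smul_add_smul_self h₁₂ 1 1 y z x
    simp only [one_smul, hyyx] at this
    linarith
  rw [h₁₂, h₂₃, hyzx]

theorem abs_trilinear_apply_self_le_of_norm_eq_one (h₁₂ : ∀ x y z, B x y z = B y x z)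
    (h₂₃ : ∀ x y z, B x y z = B x z y) (hB : ∀ u, |B u u u| ≤ τ * ‖A u‖ ^ 3) {x y : V}
    (hx : ‖A x‖ = 1) (hy : ‖A y‖ = 1) : |B x x y| ≤ τ := by
  set s := ⟪A x, A y⟫_ℝ
  set r := y - s • x
  have hyr : y = s • x + r := (add_sub_cancel _ _).symm
  have hxr : ⟪A x, A r⟫_ℝ = 0 := by
    simp [r, inner_sub_right, inner_smul_right, hx, s]
  have hr : ‖A r‖ ^ 2 = 1 - s ^ 2 := by
    rw [map_sub, map_smul, norm_sub_sq_real, inner_smul_right, real_inner_comm, norm_smul, hx, hy,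
      Real.norm_eq_abs, mul_one, sq_abs]
    ring
  have hxxx : |B x x x| ≤ τ := by simpa [hx] using hB x
  rcases eq_or_ne (A r) 0 with hr0 | hr0
  · have hs : |s| ≤ 1 := by simpa [hx, hy] using abs_real_inner_le_norm (A x) (A y)
    have hxxr : B x x r = 0 := by
      rw [h₂₃, h₁₂]; exact trilinear_apply_eq_zero_of_map_eq_zero h₁₂ h₂₃ hB hr0 x x
    rw [hyr, map_add, map_smul, hxxr, add_zero, smul_eq_mul, abs_mul]
    exact (mul_le_of_le_one_left (abs_nonneg _) hs).trans hxxx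
  · set β := ‖A r‖
    have hβ : 0 < β := norm_pos_iff.mpr hr0
    set e := β⁻¹ • r
    have hye : y = s • x + β • e := by rw [smul_inv_smul₀ hβ.ne', hyr]
    have he : ‖A e‖ = 1 := by
      rw [map_smul, norm_smul, norm_inv, norm_norm, inv_mul_cancel₀ hβ.ne']
    have hxe : ⟪A x, A e⟫_ℝ = 0 := by rw [map_smul, inner_smul_right, hxr, mul_zero]
    have hcubic : ∀ u v : ℝ, u ^ 2 + v ^ 2 = 1 →
        |binaryCubic (B x x x) (B x x e) (B x e e) (B e e e) u v| ≤ τ := fun u v huv => by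
      simpa [← trilinear_apply_smul_add_smul_cube h₁₂ h₂₃, norm_smul_add_smul_eq_one hx he hxe huv]
        using hB (u • x + v • e)
    rw [hye, map_add, map_smul, map_smul, smul_eq_mul, smul_eq_mul, mul_comm s, mul_comm β]
    exact abs_add_le_of_abs_binaryCubic_le hcubic (by rw [hr]; ring)

theorem abs_trilinear_apply_self_le (h₁₂ : ∀ x y z, B x y z = B y x z)
    (h₂₃ : ∀ x y z, B x y z = B x z y) (hB : ∀ u, |B u u u| ≤ τ * ‖A u‖ ^ 3) (x y : V) :
    |B x x y| ≤ τ * ‖A x‖ ^ 2 * ‖A y‖ := by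
  rcases eq_or_ne (A x) 0 with hx | hx
  · simp [trilinear_apply_eq_zero_of_map_eq_zero h₁₂ h₂₃ hB hx, hx]
  rcases eq_or_ne (A y) 0 with hy | hy
  · rw [h₂₃, h₁₂, trilinear_apply_eq_zero_of_map_eq_zero h₁₂ h₂₃ hB hy]
    simp [hy]
  set a := ‖A x‖
  set b := ‖A y‖
  have ha : 0 < a := norm_pos_iff.mpr hx
  have hb : 0 < b := norm_pos_iff.mpr hy
  have hunit : ∀ w : V, A w ≠ 0 → ‖A (‖A w‖⁻¹ • w)‖ = 1 := fun w hw => by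
    rw [map_smul, norm_smul, norm_inv, norm_norm, inv_mul_cancel₀ (norm_ne_zero_iff.mpr hw)]
  have h := abs_trilinear_apply_self_le_of_norm_eq_one h₁₂ h₂₃ hB (hunit x hx) (hunit y hy)
  simp only [map_smul, LinearMap.smul_apply, smul_eq_mul, abs_mul, abs_inv, abs_norm] at h
  calc |B x x y| = a ^ 2 * b * (b⁻¹ * (a⁻¹ * (a⁻¹ * |B x x y|))) := by field_simp
    _ ≤ a ^ 2 * b * τ := mul_le_mul_of_nonneg_left h (by positivity)
    _ = τ * a ^ 2 * b := by ring

theorem abs_trilinear_apply_le (h₁₂ : ∀ x y z, B x y z = B y x z)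
    (h₂₃ : ∀ x y z, B x y z = B x z y) (hB : ∀ u, |B u u u| ≤ τ * ‖A u‖ ^ 3) (x y z : V) :
    |B x y z| ≤ τ * ‖A x‖ * ‖A y‖ * ‖A z‖ := by
  rcases eq_or_ne (A x) 0 with hx | hx
  · simp [trilinear_apply_eq_zero_of_map_eq_zero h₁₂ h₂₃ hB hx, hx]
  rcases eq_or_ne (A y) 0 with hy | hy
  · rw [h₁₂, trilinear_apply_eq_zero_of_map_eq_zero h₁₂ h₂₃ hB hy]
    simp [hy]
  set a := ‖A y‖
  set b := ‖A x‖
  have hab : 0 < 4 * a * b := by positivity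
  have hpol : B (a • x + b • y) (a • x + b • y) z - B (a • x + (-b) • y) (a • x + (-b) • y) z =
      4 * a * b * B x y z := by
    rw [trilinear_apply_smul_add_smul_self h₁₂, trilinear_apply_smul_add_smul_self h₁₂]; ring
  have hplus := abs_trilinear_apply_self_le h₁₂ h₂₃ hB (a • x + b • y) z
  have hminus := abs_trilinear_apply_self_le h₁₂ h₂₃ hB (a • x + (-b) • y) z
  have hpar : ‖A (a • x + b • y)‖ ^ 2 + ‖A (a • x + (-b) • y)‖ ^ 2 = 4 * a ^ 2 * b ^ 2 := by
    simp only [map_add, map_smul, norm_add_sq_real, norm_smul, inner_smul_left, inner_smul_right,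
      Real.norm_eq_abs, mul_pow, sq_abs]
    ring
  refine le_of_mul_le_mul_left ?_ hab
  calc 4 * a * b * |B x y z|
      = |B (a • x + b • y) (a • x + b • y) z - B (a • x + (-b) • y) (a • x + (-b) • y) z| := by
        rw [hpol, abs_mul, abs_of_pos hab]
    _ ≤ τ * ‖A (a • x + b • y)‖ ^ 2 * ‖A z‖ + τ * ‖A (a • x + (-b) • y)‖ ^ 2 * ‖A z‖ :=
        (abs_sub _ _).trans (add_le_add hplus hminus)
    _ = 4 * a * b * (τ * b * a * ‖A z‖) := by linear_combination τ * ‖A z‖ * hpar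

end Trilinear

section Tensor

variable {ι : Type*} [Fintype ι]

def trilinearOfTensor (T : ι → ι → ι → ℝ) :
    (ι → ℝ) →ₗ[ℝ] (ι → ℝ) →ₗ[ℝ] (ι → ℝ) →ₗ[ℝ] ℝ :=
  LinearMap.mk₂ ℝ
    (fun u v =>
      { toFun := fun w => ∑ i, ∑ j, ∑ k, T i j k * u i * v j * w k
        map_add' := fun w w' => by simp only [Pi.add_apply, mul_add, sum_add_distrib]
        map_smul' := fun c w => by simp [mul_sum, mul_left_comm] })
    (fun u u' v => by ext w; simp [add_mul, mul_add, sum_add_distrib])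
    (fun c u v => by ext w; simp [mul_sum, mul_left_comm, mul_assoc])
    (fun u v v' => by ext w; simp [add_mul, mul_add, sum_add_distrib])
    (fun c u v => by ext w; simp [mul_sum, mul_left_comm, mul_assoc])

theorem trilinearOfTensor_comm₁₂ {T : ι → ι → ι → ℝ} (hT : ∀ i j k, T i j k = T j i k)
    (u v w : ι → ℝ) : trilinearOfTensor T u v w = trilinearOfTensor T v u w := by
  change ∑ i, ∑ j, ∑ k, _ = ∑ i, ∑ j, ∑ k, _
  rw [sum_comm]
  simp only [hT _ _ _, mul_right_comm _ (u _)]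

theorem trilinearOfTensor_comm₂₃ {T : ι → ι → ι → ℝ} (hT : ∀ i j k, T i j k = T i k j)
    (u v w : ι → ℝ) : trilinearOfTensor T u v w = trilinearOfTensor T u w v := by
  change ∑ i, ∑ j, ∑ k, _ = ∑ i, ∑ j, ∑ k, _
  refine sum_congr rfl fun i _ => ?_
  rw [sum_comm]
  simp only [hT i _ _, mul_right_comm _ (v _)]

end Tensor

theorem euclNorm_eq_norm {p : ℕ} (v : Fin p → ℝ) : euclNorm v = ‖WithLp.toLp 2 v‖ := by
  simp [euclNorm, EuclideanSpace.norm_eq]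

theorem tensor_trilinear_bound_of_cubic_bound_general
    (p : ℕ) (T : Fin p → Fin p → Fin p → ℝ)
    (hsym : ∀ i j k, T i j k = T j i k ∧ T i j k = T i k j)
    (Γ : Matrix (Fin p) (Fin p) ℝ) (τ : ℝ)
    (hT : ∀ u : Fin p → ℝ,
      |∑ i, ∑ j, ∑ k, T i j k * u i * u j * u k| ≤ τ * euclNorm (Γ.mulVec u) ^ 3) :
    ∀ u₁ u₂ u₃ : Fin p → ℝ,
      |∑ i, ∑ j, ∑ k, T i j k * u₁ i * u₂ j * u₃ k|
        ≤ τ * euclNorm (Γ.mulVec u₁) * euclNorm (Γ.mulVec u₂) * euclNorm (Γ.mulVec u₃) := by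
  set A := (WithLp.linearEquiv 2 ℝ (Fin p → ℝ)).symm.toLinearMap ∘ₗ Γ.mulVecLin
  have hA : ∀ u, euclNorm (Γ *ᵥ u) = ‖A u‖ := fun u => euclNorm_eq_norm _
  simp only [hA] at hT ⊢
  exact abs_trilinear_apply_le (B := trilinearOfTensor T)
    (trilinearOfTensor_comm₁₂ fun i j k => (hsym i j k).1)
    (trilinearOfTensor_comm₂₃ fun i j k => (hsym i j k).2) hT

/-- If the symmetric 3-tensor `T` satisfies condition (Γ), i.e.
`|T(u)| ≤ τ ‖Γu‖³` for all `u` with `Γ` a symmetric `p×p` matrix and `τ > 0`, then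
`|⟨T, u₁ ⊗ u₂ ⊗ u₃⟩| ≤ τ ‖Γu₁‖ ‖Γu₂‖ ‖Γu₃‖` for all `u₁, u₂, u₃`. -/
theorem tensor_trilinear_bound_of_cubic_bound
    (p : ℕ) (T : Fin p → Fin p → Fin p → ℝ)
    (hsym : ∀ i j k, T i j k = T j i k ∧ T i j k = T i k j)
    (Γ : Matrix (Fin p) (Fin p) ℝ) (hΓ : Γ.IsSymm) (τ : ℝ) (hτ : 0 < τ)
    (hT : ∀ u : Fin p → ℝ,
      |∑ i, ∑ j, ∑ k, T i j k * u i * u j * u k| ≤ τ * euclNorm (Γ.mulVec u) ^ 3) :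
    ∀ u₁ u₂ u₃ : Fin p → ℝ,
      |∑ i, ∑ j, ∑ k, T i j k * u₁ i * u₂ j * u₃ k|
        ≤ τ * euclNorm (Γ.mulVec u₁) * euclNorm (Γ.mulVec u₂) * euclNorm (Γ.mulVec u₃) :=
  tensor_trilinear_bound_of_cubic_bound_general p T hsym Γ τ hT
end

section
/- Suppose the symmetric 3-tensor T satisfies condition (Γ). Then for all u, w ∈ ℝ^p it holds |wᵀ T[u] w| ≤ τ ‖Γu‖ ‖Γw‖², where T[u] = ∑_{i=1}^p u_i T_i; in particular T[u] ≤ τ‖Γu‖ Γ² in the sense of quadratic forms. -/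
open Matrix Finset

lemma euclNorm_nonneg {p : ℕ} (v : Fin p → ℝ) : 0 ≤ euclNorm v := Real.sqrt_nonneg _

lemma euclNorm_sq {p : ℕ} (v : Fin p → ℝ) : euclNorm v ^ 2 = ∑ i, v i ^ 2 := by
  rw [euclNorm, Real.sq_sqrt]; positivity

lemma euclNorm_eq_zero {p : ℕ} (v : Fin p → ℝ) (h : euclNorm v = 0) : v = 0 := by
  have h2 : ∑ i, v i ^ 2 = 0 := by rw [← euclNorm_sq, h]; ring
  funext i
  have h3 := (Finset.sum_eq_zero_iff_of_nonneg (fun i _ => sq_nonneg (v i))).1 h2 i (mem_univ i)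
  exact pow_eq_zero_iff (two_ne_zero) |>.1 h3

lemma euclNorm_sq_eq_dot {p : ℕ} (v : Fin p → ℝ) : euclNorm v ^ 2 = v ⬝ᵥ v := by
  rw [euclNorm_sq]; simp [dotProduct, sq]

lemma euclNorm_smul {p : ℕ} (a : ℝ) (v : Fin p → ℝ) :
    euclNorm (a • v) = |a| * euclNorm v := by
  unfold euclNorm
  have : ∑ i, (a • v) i ^ 2 = a^2 * ∑ i, v i ^ 2 := by
    rw [Finset.mul_sum]; refine Finset.sum_congr rfl fun i _ => ?_
    simp [smul_eq_mul]; ring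
  rw [this, Real.sqrt_mul (sq_nonneg a), Real.sqrt_sq_eq_abs]

lemma abs_le_of_sq_le_sq'' (x y : ℝ) (h : x^2 ≤ y^2) (hy : 0 ≤ y) : |x| ≤ y := by
  rw [← Real.sqrt_sq_eq_abs, ← Real.sqrt_sq hy]; exact Real.sqrt_le_sqrt h

lemma quad_bounded (a b c M : ℝ) (h : ∀ t : ℝ, |a + b*t + c*t^2| ≤ M) : b = 0 ∧ c = 0 := by
  have hM : 0 ≤ M := le_trans (abs_nonneg _) (by simpa using h 0)
  have ha : |a| ≤ M := by simpa using h 0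
  have hc : c = 0 := by
    by_contra hc0
    set t : ℝ := Real.sqrt (4*M/|c| + 1) with ht
    have htsq : t^2 = 4*M/|c| + 1 := Real.sq_sqrt (by positivity)
    have h1 := h t
    have h2 := h (-t)
    have key : |c| * t^2 ≤ 4*M := by
      have e : (2*c)*t^2 = (a + b*t + c*t^2) + (a + b*(-t) + c*(-t)^2) - 2*a := by ring
      have h3 : |(a + b*t + c*t^2) + (a + b*(-t) + c*(-t)^2) - 2*a| ≤ M + M + |2*a| :=
        le_trans (abs_sub _ _) (by gcongr; exact le_trans (abs_add_le _ _) (add_le_add h1 h2))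
      have h4 : |(2*c)*t^2| ≤ M + M + |2*a| := by rw [e]; exact h3
      rw [abs_mul, abs_of_nonneg (sq_nonneg t), abs_mul] at h4
      have h5 : |(2:ℝ)| = 2 := by norm_num
      rw [h5] at h4
      have h6 : |2*a| = 2*|a| := by rw [abs_mul, h5]
      rw [h6] at h4
      nlinarith [abs_nonneg a, abs_nonneg c, ha]
    have : |c| * (4*M/|c| + 1) ≤ 4*M := by rw [← htsq]; exact key
    have hcpos : 0 < |c| := abs_pos.2 hc0
    rw [mul_add, mul_div_cancel₀ _ (ne_of_gt hcpos), mul_one] at this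
    linarith
  have hb : b = 0 := by
    by_contra hb0
    have hbpos : 0 < |b| := abs_pos.2 hb0
    set t : ℝ := (2*M + 1)/|b| with ht
    have h1 := h t
    rw [hc] at h1
    have : |b*t| ≤ 2*M := by
      calc |b*t| = |(a + b*t + 0*t^2) - a| := by ring_nf
      _ ≤ |a + b*t + 0*t^2| + |a| := abs_sub _ _
      _ ≤ M + M := add_le_add h1 ha
      _ = 2*M := by ring
    rw [abs_mul] at this
    have htv : |t| = (2*M+1)/|b| := by
      rw [ht, abs_of_nonneg (by positivity)]
    rw [htv, mul_div_cancel₀ _ (ne_of_gt hbpos)] at this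
    linarith
  exact ⟨hb, hc⟩

/-- The trilinear form of the tensor. -/
def S3 {p : ℕ} (T : Fin p → Fin p → Fin p → ℝ) (u v w : Fin p → ℝ) : ℝ :=
  ∑ i, ∑ j, ∑ k, T i j k * u i * v j * w k

section Tensor
variable {p : ℕ} {T : Fin p → Fin p → Fin p → ℝ}
variable (hsym : ∀ i j k, T i j k = T j i k ∧ T i j k = T i k j)
include hsym

lemma S3_sym12 (u v w : Fin p → ℝ) : S3 T u v w = S3 T v u w := by
  unfold S3
  rw [Finset.sum_comm]
  refine Finset.sum_congr rfl fun j _ => Finset.sum_congr rfl fun i _ =>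
    Finset.sum_congr rfl fun k _ => ?_
  rw [(hsym i j k).1]; ring

lemma S3_sym23 (u v w : Fin p → ℝ) : S3 T u v w = S3 T u w v := by
  unfold S3
  refine Finset.sum_congr rfl fun i _ => ?_
  rw [Finset.sum_comm]
  refine Finset.sum_congr rfl fun k _ => Finset.sum_congr rfl fun j _ => ?_
  rw [(hsym i j k).2]; ring

lemma S3_sym13 (u v w : Fin p → ℝ) : S3 T u v w = S3 T w v u := by
  rw [S3_sym12 hsym, S3_sym23 hsym, S3_sym12 hsym]

omit hsym

lemma S3_left_add (x y v w : Fin p → ℝ) : S3 T (x + y) v w = S3 T x v w + S3 T y v w := by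
  unfold S3
  rw [← Finset.sum_add_distrib]
  refine Finset.sum_congr rfl fun i _ => ?_
  rw [← Finset.sum_add_distrib]
  refine Finset.sum_congr rfl fun j _ => ?_
  rw [← Finset.sum_add_distrib]
  refine Finset.sum_congr rfl fun k _ => ?_
  simp [Pi.add_apply]; ring

lemma S3_left_smul (a : ℝ) (x v w : Fin p → ℝ) : S3 T (a • x) v w = a * S3 T x v w := by
  unfold S3
  rw [Finset.mul_sum]
  refine Finset.sum_congr rfl fun i _ => ?_
  rw [Finset.mul_sum]
  refine Finset.sum_congr rfl fun j _ => ?_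
  rw [Finset.mul_sum]
  refine Finset.sum_congr rfl fun k _ => ?_
  simp [Pi.smul_apply, smul_eq_mul]; ring

include hsym

lemma S3_mid_smul (a : ℝ) (u x w : Fin p → ℝ) : S3 T u (a • x) w = a * S3 T u x w := by
  rw [S3_sym12 hsym, S3_left_smul, S3_sym12 hsym]

lemma S3_right_smul (a : ℝ) (u v x : Fin p → ℝ) : S3 T u v (a • x) = a * S3 T u v x := by
  rw [S3_sym23 hsym, S3_mid_smul hsym, S3_sym23 hsym]

lemma S3_mid_add (u x y w : Fin p → ℝ) : S3 T u (x + y) w = S3 T u x w + S3 T u y w := by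
  rw [S3_sym12 hsym, S3_left_add, S3_sym12 hsym x, S3_sym12 hsym y]

lemma S3_right_add (u v x y : Fin p → ℝ) : S3 T u v (x + y) = S3 T u v x + S3 T u v y := by
  rw [S3_sym23 hsym, S3_mid_add hsym, S3_sym23 hsym u x, S3_sym23 hsym u y]

lemma P_expand (x y : ℝ) (u w : Fin p → ℝ) :
    S3 T (x • u + y • w) (x • u + y • w) (x • u + y • w)
      = x^3 * S3 T u u u + 3*x^2*y * S3 T u u w + 3*x*y^2 * S3 T u w w + y^3 * S3 T w w w := by
  rw [S3_left_add, S3_left_smul, S3_left_smul,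
      S3_mid_add hsym, S3_mid_smul hsym, S3_mid_smul hsym,
      S3_mid_add hsym, S3_mid_smul hsym, S3_mid_smul hsym,
      S3_right_add hsym, S3_right_smul hsym, S3_right_smul hsym,
      S3_right_add hsym, S3_right_smul hsym, S3_right_smul hsym,
      S3_right_add hsym, S3_right_smul hsym, S3_right_smul hsym,
      S3_right_add hsym, S3_right_smul hsym, S3_right_smul hsym]
  have e1 : S3 T u w u = S3 T u u w := by rw [S3_sym23 hsym u w u]
  have e2 : S3 T w u u = S3 T u u w := by rw [S3_sym12 hsym w u u, e1]
  have e3 : S3 T w u w = S3 T u w w := by rw [S3_sym12 hsym w u w]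
  have e4 : S3 T w w u = S3 T u w w := by rw [S3_sym23 hsym w w u, e3]
  rw [e1, e2, e3, e4]
  ring

end Tensor

set_option maxHeartbeats 1000000 in
/-- Pure real-arithmetic certificate: the three sampled cubic values bound `ρ`. -/
lemma cert_bound (A B C D c s r τ ρ : ℝ)
    (hcs : c^2 + s^2 = 1) (hr : r^2 = 3)
    (hv0 : |(c^3 * A + 3*c^2*s * B + 3*c*s^2 * C + s^3 * D)| ≤ τ)
    (hv1 : |(((-c - r*s)/2)^3 * A + 3*((-c - r*s)/2)^2*((r*c - s)/2) * B + 3*((-c - r*s)/2)*((r*c - s)/2)^2 * C + ((r*c - s)/2)^3 * D)| ≤ τ)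
    (hv2 : |(((-c + r*s)/2)^3 * A + 3*((-c + r*s)/2)^2*((-(r*c) - s)/2) * B + 3*((-c + r*s)/2)*((-(r*c) - s)/2)^2 * C + ((-(r*c) - s)/2)^3 * D)| ≤ τ)
    (hρval : (4*c^3 - 3*c) * A + (3*s - 4*s^3) * B = ρ) : ρ ≤ τ := by
  have hc0 : (0:ℝ) ≤ ((1 + 2*(c^2 - s^2))^2/9) := by positivity
  have hc1 : (0:ℝ) ≤ ((1 + 2*((s^2 - c^2)/2 + r*(c*s)))^2/9) := by positivity
  have hc2 : (0:ℝ) ≤ ((1 + 2*((s^2 - c^2)/2 - r*(c*s)))^2/9) := by positivity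
  have hsum : ((1 + 2*(c^2 - s^2))^2/9) + ((1 + 2*((s^2 - c^2)/2 + r*(c*s)))^2/9) + ((1 + 2*((s^2 - c^2)/2 - r*(c*s)))^2/9) = 1 := by
    linear_combination (((2:ℝ)/3) + ((2:ℝ)/3)*s^2 + (-2:ℝ)*c^2 + ((8:ℝ)/9)*c^2*r^2) * hcs + (((8:ℝ)/9)*c^2 + ((-8:ℝ)/9)*c^4) * hr
  have hkey : ((1 + 2*(c^2 - s^2))^2/9) * (c^3 * A + 3*c^2*s * B + 3*c*s^2 * C + s^3 * D) +
      ((1 + 2*((s^2 - c^2)/2 + r*(c*s)))^2/9) * (((-c - r*s)/2)^3 * A + 3*((-c - r*s)/2)^2*((r*c - s)/2) * B + 3*((-c - r*s)/2)*((r*c - s)/2)^2 * C + ((r*c - s)/2)^3 * D) +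
      ((1 + 2*((s^2 - c^2)/2 - r*(c*s)))^2/9) * (((-c + r*s)/2)^3 * A + 3*((-c + r*s)/2)^2*((-(r*c) - s)/2) * B + 3*((-c + r*s)/2)*((-(r*c) - s)/2)^2 * C + ((-(r*c) - s)/2)^3 * D)
      = (4*c^3 - 3*c) * A + (3*s - 4*s^3) * B := by
    linear_combination ((4:ℝ)*s*B + ((-1:ℝ)/3)*s*r^2*B + ((-1:ℝ)/12)*s^3*D + ((-1:ℝ)/4)*s^3*r^2*B + ((5:ℝ)/12)*s^5*D + ((-1:ℝ)/12)*s^5*r^2*B + ((-1:ℝ)/3)*c*r^2*A + ((-2:ℝ)/9)*c*r^4*A + ((-1:ℝ)/4)*c*s^2*C + ((-1:ℝ)/6)*c*s^2*r^2*C + ((-1:ℝ)/4)*c*s^2*r^2*A + ((-2:ℝ)/9)*c*s^2*r^4*A + ((5:ℝ)/4)*c*s^4*C + ((-1:ℝ)/6)*c*s^4*r^2*C + ((-1:ℝ)/12)*c*s^4*r^2*A + ((-1:ℝ)/9)*c*s^4*r^4*A + ((-2:ℝ)/3)*c^2*s*D + ((-1:ℝ)/4)*c^2*s*B + ((11:ℝ)/36)*c^2*s*r^2*D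 + ((-1:ℝ)/6)*c^2*s*r^2*B + ((1:ℝ)/3)*c^2*s*r^4*B + ((-5:ℝ)/4)*c^2*s^3*D + ((5:ℝ)/4)*c^2*s^3*B + ((5:ℝ)/36)*c^2*s^3*r^2*D + ((-1:ℝ)/4)*c^2*s^3*r^2*B + (-2:ℝ)*c^3*C + ((-1:ℝ)/12)*c^3*A + ((3:ℝ)/4)*c^3*r^2*C + ((1:ℝ)/9)*c^3*r^4*A + ((-15:ℝ)/4)*c^3*s^2*C + ((5:ℝ)/12)*c^3*s^2*A + ((5:ℝ)/12)*c^3*s^2*r^2*C + ((-1:ℝ)/12)*c^3*s^2*r^2*A + ((1:ℝ)/3)*c^3*s^2*r^4*C + ((-1:ℝ)/9)*c^3*s^2*r^4*A + ((5:ℝ)/3)*c^4*s*D + ((-15:ℝ)/4)*c^4*s*B + ((-11:ℝ)/36)*c^4*s*r^2*D + ((1:ℝ)/2)*c^4*s*r^2*B + ((-2:ℝ)/9)*c^4*s*r^4*D + ((1:ℝ)/3)*c^4*s*r^4*B + (5:ℝ)*c^5*C + ((-5:ℝ)/4)*c^5*A + ((-3:ℝ)/4)*c^5*r^2*C + ((2:ℝ)/9)*c^5*r^2*A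 + ((-1:ℝ)/3)*c^5*r^4*C + ((1:ℝ)/9)*c^5*r^4*A) * hcs + (((-1:ℝ)/3)*s*B + (-1:ℝ)*c*A + ((-2:ℝ)/9)*c*r^2*A + ((2:ℝ)/9)*c^2*s*D + ((4:ℝ)/3)*c^2*s*B + ((1:ℝ)/3)*c^2*s*r^2*B + ((2:ℝ)/3)*c^3*C + ((4:ℝ)/3)*c^3*A + ((1:ℝ)/3)*c^3*r^2*A + ((-7:ℝ)/9)*c^4*s*D + ((2:ℝ)/3)*c^4*s*B + ((-1:ℝ)/9)*c^4*s*r^2*D + ((-7:ℝ)/3)*c^5*C + ((2:ℝ)/9)*c^5*A + ((-1:ℝ)/3)*c^5*r^2*C + ((5:ℝ)/9)*c^6*s*D + ((-5:ℝ)/3)*c^6*s*B + ((1:ℝ)/9)*c^6*s*r^2*D + ((-1:ℝ)/3)*c^6*s*r^2*B + ((5:ℝ)/3)*c^7*C + ((-5:ℝ)/9)*c^7*A + ((1:ℝ)/3)*c^7*r^2*C + ((-1:ℝ)/9)*c^7*r^2*A) * hr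
  have b0 : ((1 + 2*(c^2 - s^2))^2/9) * (c^3 * A + 3*c^2*s * B + 3*c*s^2 * C + s^3 * D) ≤ ((1 + 2*(c^2 - s^2))^2/9) * τ :=
    mul_le_mul_of_nonneg_left (le_trans (le_abs_self _) hv0) hc0
  have b1 : ((1 + 2*((s^2 - c^2)/2 + r*(c*s)))^2/9) * (((-c - r*s)/2)^3 * A + 3*((-c - r*s)/2)^2*((r*c - s)/2) * B + 3*((-c - r*s)/2)*((r*c - s)/2)^2 * C + ((r*c - s)/2)^3 * D) ≤ ((1 + 2*((s^2 - c^2)/2 + r*(c*s)))^2/9) * τ :=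
    mul_le_mul_of_nonneg_left (le_trans (le_abs_self _) hv1) hc1
  have b2 : ((1 + 2*((s^2 - c^2)/2 - r*(c*s)))^2/9) * (((-c + r*s)/2)^3 * A + 3*((-c + r*s)/2)^2*((-(r*c) - s)/2) * B + 3*((-c + r*s)/2)*((-(r*c) - s)/2)^2 * C + ((-(r*c) - s)/2)^3 * D) ≤ ((1 + 2*((s^2 - c^2)/2 - r*(c*s)))^2/9) * τ :=
    mul_le_mul_of_nonneg_left (le_trans (le_abs_self _) hv2) hc2
  have hτsum : ((1 + 2*(c^2 - s^2))^2/9) * τ + ((1 + 2*((s^2 - c^2)/2 + r*(c*s)))^2/9) * τ + ((1 + 2*((s^2 - c^2)/2 - r*(c*s)))^2/9) * τ = τ := by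
    linear_combination τ * hsum
  linarith [b0, b1, b2, hτsum, hkey, hρval]

section Main
variable {p : ℕ} {T : Fin p → Fin p → Fin p → ℝ}

lemma norm_comb_one (Γ : Matrix (Fin p) (Fin p) ℝ) (a b : ℝ) (x y : Fin p → ℝ)
    (hx : euclNorm (Γ.mulVec x) = 1) (hy : euclNorm (Γ.mulVec y) = 1)
    (hxy : Γ.mulVec x ⬝ᵥ Γ.mulVec y = 0) (hab : a^2 + b^2 = 1) :
    euclNorm (Γ.mulVec (a • x + b • y)) = 1 := by
  have e1 : Γ.mulVec x ⬝ᵥ Γ.mulVec x = 1 := by rw [← euclNorm_sq_eq_dot, hx]; norm_num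
  have e2 : Γ.mulVec y ⬝ᵥ Γ.mulVec y = 1 := by rw [← euclNorm_sq_eq_dot, hy]; norm_num
  have e3 : Γ.mulVec y ⬝ᵥ Γ.mulVec x = 0 := by rw [dotProduct_comm]; exact hxy
  have hsq : euclNorm (Γ.mulVec (a • x + b • y))^2 = 1 := by
    rw [euclNorm_sq_eq_dot, Matrix.mulVec_add, Matrix.mulVec_smul, Matrix.mulVec_smul]
    simp only [add_dotProduct, dotProduct_add, smul_dotProduct, dotProduct_smul, smul_eq_mul]
    rw [e1, e2, e3, hxy]
    linear_combination hab
  have hnn := euclNorm_nonneg (Γ.mulVec (a • x + b • y))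
  have hfac : (euclNorm (Γ.mulVec (a • x + b • y)) - 1) *
      (euclNorm (Γ.mulVec (a • x + b • y)) + 1) = 0 := by linear_combination hsq
  rcases mul_eq_zero.1 hfac with h | h
  · linarith
  · linarith

variable (hsym : ∀ i j k, T i j k = T j i k ∧ T i j k = T i k j)
include hsym

lemma S3_degenerate (Γ : Matrix (Fin p) (Fin p) ℝ) (τ : ℝ)
    (hT' : ∀ v, |S3 T v v v| ≤ τ * euclNorm (Γ.mulVec v)^3)
    (z x : Fin p → ℝ) (hz : Γ.mulVec z = 0) :
    S3 T z x x = 0 ∧ S3 T z z x = 0 := by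
  have hnorm0 : euclNorm (0 : Fin p → ℝ) = 0 := by
    simp [euclNorm]
  have hD : S3 T z z z = 0 := by
    have h0 := hT' z
    rw [hz, hnorm0] at h0
    have : |S3 T z z z| ≤ 0 := by linarith [h0]
    exact abs_eq_zero.mp (le_antisymm this (abs_nonneg _))
  have key : ∀ t : ℝ, |S3 T x x x + (3 * S3 T x x z) * t + (3 * S3 T x z z) * t^2|
      ≤ τ * euclNorm (Γ.mulVec x)^3 := by
    intro t
    have h := hT' ((1:ℝ) • x + t • z)
    rw [P_expand hsym] at h
    have hg : Γ.mulVec ((1:ℝ) • x + t • z) = Γ.mulVec x := by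
      rw [Matrix.mulVec_add, Matrix.mulVec_smul, Matrix.mulVec_smul, hz]; simp
    rw [hg, hD] at h
    have e : (1:ℝ)^3 * S3 T x x x + 3*(1:ℝ)^2*t * S3 T x x z + 3*1*t^2 * S3 T x z z + t^3*0
        = S3 T x x x + (3 * S3 T x x z) * t + (3 * S3 T x z z) * t^2 := by ring
    rw [e] at h
    exact h
  obtain ⟨h1, h2⟩ := quad_bounded _ _ _ _ key
  constructor
  · rw [S3_sym13 hsym]; linarith
  · rw [S3_sym13 hsym]; linarith

lemma main_ortho (Γ : Matrix (Fin p) (Fin p) ℝ) (τ : ℝ) (hτ : 0 < τ)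
    (hT' : ∀ v, |S3 T v v v| ≤ τ * euclNorm (Γ.mulVec v)^3)
    (w u₂ : Fin p → ℝ) (hw : euclNorm (Γ.mulVec w) = 1) (hu : euclNorm (Γ.mulVec u₂) = 1)
    (ho : Γ.mulVec w ⬝ᵥ Γ.mulVec u₂ = 0) :
    (S3 T w w u₂)^2 + (S3 T w w w)^2 ≤ τ^2 := by
  by_cases h0 : (S3 T w w w)^2 + (S3 T w w u₂)^2 = 0
  · nlinarith [h0, sq_nonneg τ]
  have hpos : 0 < (S3 T w w w)^2 + (S3 T w w u₂)^2 :=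
    lt_of_le_of_ne (by positivity) (Ne.symm h0)
  set ρ := Real.sqrt ((S3 T w w w)^2 + (S3 T w w u₂)^2) with hρdef
  have hρpos : 0 < ρ := Real.sqrt_pos.2 hpos
  have hρsq : ρ^2 = (S3 T w w w)^2 + (S3 T w w u₂)^2 := Real.sq_sqrt hpos.le
  have hone : (S3 T w w w / ρ)^2 + (S3 T w w u₂ / ρ)^2 = 1 := by
    field_simp
    linarith [hρsq]
  obtain ⟨α, hcα, hsα⟩ : ∃ α, Real.cos α = S3 T w w w / ρ ∧ Real.sin α = S3 T w w u₂ / ρ := by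
    rcases le_or_gt 0 (S3 T w w u₂ / ρ) with hBge | hBlt
    · refine ⟨Real.arccos (S3 T w w w / ρ),
        Real.cos_arccos (by nlinarith [sq_nonneg (S3 T w w u₂ / ρ)])
          (by nlinarith [sq_nonneg (S3 T w w u₂ / ρ)]), ?_⟩
      rw [Real.sin_arccos]
      have e : 1 - (S3 T w w w / ρ)^2 = (S3 T w w u₂ / ρ)^2 := by linarith
      rw [e, Real.sqrt_sq hBge]
    · refine ⟨-Real.arccos (S3 T w w w / ρ), ?_, ?_⟩
      · rw [Real.cos_neg]
        exact Real.cos_arccos (by nlinarith [sq_nonneg (S3 T w w u₂ / ρ)])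
          (by nlinarith [sq_nonneg (S3 T w w u₂ / ρ)])
      · rw [Real.sin_neg, Real.sin_arccos]
        have e : 1 - (S3 T w w w / ρ)^2 = (S3 T w w u₂ / ρ)^2 := by linarith
        rw [e, Real.sqrt_sq_eq_abs, abs_of_neg hBlt]
        ring
  set c := Real.cos (α/3) with hcdef
  set s := Real.sin (α/3) with hsdef
  have hcs : c^2 + s^2 = 1 := Real.cos_sq_add_sin_sq _
  have h3e : (3:ℝ) * (α / 3) = α := by ring
  have h3c : 4*c^3 - 3*c = S3 T w w w / ρ := by
    rw [hcdef, ← Real.cos_three_mul, h3e, hcα]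
  have h3s : 3*s - 4*s^3 = S3 T w w u₂ / ρ := by
    rw [hsdef, ← Real.sin_three_mul, h3e, hsα]
  set r := Real.sqrt 3 with hrdef
  have hr : r^2 = 3 := Real.sq_sqrt (by norm_num)
  have hτ1 : ∀ vv : Fin p → ℝ, euclNorm (Γ.mulVec vv) = 1 → |S3 T vv vv vv| ≤ τ := by
    intro vv hvv
    have h := hT' vv
    rw [hvv] at h
    simpa using h
  have hn0 : euclNorm (Γ.mulVec (c • w + s • u₂)) = 1 :=
    norm_comb_one Γ c s w u₂ hw hu ho hcs
  have hn1 : euclNorm (Γ.mulVec (((-c - r*s)/2) • w + ((r*c - s)/2) • u₂)) = 1 := by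
    refine norm_comb_one Γ _ _ w u₂ hw hu ho ?_
    linear_combination ((1:ℝ)/4 + r^2/4) * hcs + ((1:ℝ)/4) * hr
  have hn2 : euclNorm (Γ.mulVec (((-c + r*s)/2) • w + ((-(r*c) - s)/2) • u₂)) = 1 := by
    refine norm_comb_one Γ _ _ w u₂ hw hu ho ?_
    linear_combination ((1:ℝ)/4 + r^2/4) * hcs + ((1:ℝ)/4) * hr
  have hv0 := hτ1 _ hn0
  rw [P_expand hsym] at hv0
  have hv1 := hτ1 _ hn1
  rw [P_expand hsym] at hv1
  have hv2 := hτ1 _ hn2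
  rw [P_expand hsym] at hv2
  have hρval : (4*c^3 - 3*c) * (S3 T w w w) + (3*s - 4*s^3) * (S3 T w w u₂) = ρ := by
    rw [h3c, h3s]
    field_simp
    linarith [hρsq]
  have hbound : ρ ≤ τ :=
    cert_bound (S3 T w w w) (S3 T w w u₂) (S3 T w u₂ u₂) (S3 T u₂ u₂ u₂) c s r τ ρ
      hcs hr hv0 hv1 hv2 hρval
  nlinarith [hbound, hρpos.le, hρsq]

end Main

section Final
variable {p : ℕ} {T : Fin p → Fin p → Fin p → ℝ}
variable (hsym : ∀ i j k, T i j k = T j i k ∧ T i j k = T i k j)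
include hsym

lemma unit_case (Γ : Matrix (Fin p) (Fin p) ℝ) (τ : ℝ) (hτ : 0 < τ)
    (hT' : ∀ v, |S3 T v v v| ≤ τ * euclNorm (Γ.mulVec v)^3)
    (u w' : Fin p → ℝ) (hw' : euclNorm (Γ.mulVec w') = 1) :
    |S3 T u w' w'| ≤ τ * euclNorm (Γ.mulVec u) := by
  set cc := Γ.mulVec u ⬝ᵥ Γ.mulVec w' with hccdef
  set rv := u - cc • w' with hrvdef
  have hΓr : Γ.mulVec rv = Γ.mulVec u - cc • Γ.mulVec w' := by
    rw [hrvdef, Matrix.mulVec_sub, Matrix.mulVec_smul]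
  have hw'dot : Γ.mulVec w' ⬝ᵥ Γ.mulVec w' = 1 := by
    rw [← euclNorm_sq_eq_dot, hw']; norm_num
  have horth : Γ.mulVec rv ⬝ᵥ Γ.mulVec w' = 0 := by
    rw [hΓr, sub_dotProduct, smul_dotProduct, hw'dot, smul_eq_mul]
    ring
  have hdecomp : u = cc • w' + rv := by rw [hrvdef]; abel
  set s₀ := euclNorm (Γ.mulVec rv) with hs₀def
  have hrdot : Γ.mulVec rv ⬝ᵥ Γ.mulVec rv = s₀^2 := (euclNorm_sq_eq_dot _).symm
  have horth' : Γ.mulVec w' ⬝ᵥ Γ.mulVec rv = 0 := by rw [dotProduct_comm]; exact horth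
  have hNu : euclNorm (Γ.mulVec u)^2 = cc^2 + s₀^2 := by
    conv_lhs => rw [hdecomp]
    rw [euclNorm_sq_eq_dot, Matrix.mulVec_add, Matrix.mulVec_smul]
    simp only [add_dotProduct, dotProduct_add, smul_dotProduct, dotProduct_smul, smul_eq_mul]
    rw [hw'dot, horth, horth', hrdot]
    ring
  by_cases h0 : s₀ = 0
  · have hΓr0 : Γ.mulVec rv = 0 := euclNorm_eq_zero _ h0
    have hz := S3_degenerate hsym Γ τ hT' rv w' hΓr0
    have hsplit : S3 T u w' w' = cc * S3 T w' w' w' + S3 T rv w' w' := by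
      conv_lhs => rw [hdecomp]
      rw [S3_left_add, S3_left_smul]
    rw [hsplit, hz.1, add_zero]
    have hAτ : |S3 T w' w' w'| ≤ τ := by
      have h := hT' w'
      rw [hw'] at h
      simpa using h
    have hccle : |cc| ≤ euclNorm (Γ.mulVec u) := by
      apply abs_le_of_sq_le_sq'' _ _ ?_ (euclNorm_nonneg _)
      nlinarith [hNu, sq_nonneg s₀]
    calc |cc * S3 T w' w' w'| = |cc| * |S3 T w' w' w'| := abs_mul _ _
      _ ≤ euclNorm (Γ.mulVec u) * τ :=
          mul_le_mul hccle hAτ (abs_nonneg _) (euclNorm_nonneg _)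
      _ = τ * euclNorm (Γ.mulVec u) := mul_comm _ _
  · have hs₀pos : 0 < s₀ := lt_of_le_of_ne (euclNorm_nonneg _) (Ne.symm h0)
    set u₂ := s₀⁻¹ • rv with hu₂def
    have hΓu₂ : Γ.mulVec u₂ = s₀⁻¹ • Γ.mulVec rv := by rw [hu₂def, Matrix.mulVec_smul]
    have hNu₂ : euclNorm (Γ.mulVec u₂) = 1 := by
      rw [hΓu₂, euclNorm_smul, abs_of_nonneg (inv_nonneg.2 hs₀pos.le), ← hs₀def]
      exact inv_mul_cancel₀ (ne_of_gt hs₀pos)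
    have ho : Γ.mulVec w' ⬝ᵥ Γ.mulVec u₂ = 0 := by
      rw [hΓu₂, dotProduct_smul, horth', smul_eq_mul, mul_zero]
    have hAB := main_ortho hsym Γ τ hτ hT' w' u₂ hw' hNu₂ ho
    have hru : rv = s₀ • u₂ := by
      rw [hu₂def, smul_smul, mul_inv_cancel₀ (ne_of_gt hs₀pos), one_smul]
    have hsplit : S3 T u w' w' = cc * S3 T w' w' w' + s₀ * S3 T w' w' u₂ := by
      conv_lhs => rw [hdecomp, hru]
      rw [S3_left_add, S3_left_smul, S3_left_smul, S3_sym13 hsym u₂ w' w']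
    rw [hsplit]
    apply abs_le_of_sq_le_sq'' _ _ ?_ (mul_nonneg hτ.le (euclNorm_nonneg _))
    have hexp : (τ * euclNorm (Γ.mulVec u))^2 = τ^2 * (cc^2 + s₀^2) := by
      rw [mul_pow, hNu]
    rw [hexp]
    nlinarith [sq_nonneg (cc * S3 T w' w' u₂ - s₀ * S3 T w' w' w'),
      mul_le_mul_of_nonneg_left hAB (show (0:ℝ) ≤ cc^2 + s₀^2 by positivity),
      sq_nonneg (cc * S3 T w' w' w' + s₀ * S3 T w' w' u₂)]

lemma general_case (Γ : Matrix (Fin p) (Fin p) ℝ) (τ : ℝ) (hτ : 0 < τ)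
    (hT' : ∀ v, |S3 T v v v| ≤ τ * euclNorm (Γ.mulVec v)^3)
    (u w : Fin p → ℝ) :
    |S3 T u w w| ≤ τ * euclNorm (Γ.mulVec u) * euclNorm (Γ.mulVec w)^2 := by
  by_cases hw0 : euclNorm (Γ.mulVec w) = 0
  · have hΓw : Γ.mulVec w = 0 := euclNorm_eq_zero _ hw0
    have hz := S3_degenerate hsym Γ τ hT' w u hΓw
    have : S3 T u w w = 0 := by
      rw [S3_sym13 hsym u w w]
      exact hz.2
    rw [this]
    simp only [abs_zero]
    exact mul_nonneg (mul_nonneg hτ.le (euclNorm_nonneg _)) (sq_nonneg _)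
  · set b := euclNorm (Γ.mulVec w) with hbdef
    have hbpos : 0 < b := lt_of_le_of_ne (euclNorm_nonneg _) (Ne.symm hw0)
    set w' := b⁻¹ • w with hw'def
    have hNw' : euclNorm (Γ.mulVec w') = 1 := by
      rw [hw'def, Matrix.mulVec_smul, euclNorm_smul,
        abs_of_nonneg (inv_nonneg.2 hbpos.le), ← hbdef]
      exact inv_mul_cancel₀ (ne_of_gt hbpos)
    have hwb : w = b • w' := by
      rw [hw'def, smul_smul, mul_inv_cancel₀ (ne_of_gt hbpos), one_smul]
    have hscale : S3 T u w w = b^2 * S3 T u w' w' := by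
      conv_lhs => rw [hwb]
      rw [S3_mid_smul hsym, S3_right_smul hsym]
      ring
    have h1 := unit_case hsym Γ τ hτ hT' u w' hNw'
    rw [hscale, abs_mul, abs_of_nonneg (sq_nonneg b)]
    calc b^2 * |S3 T u w' w'| ≤ b^2 * (τ * euclNorm (Γ.mulVec u)) := by
          exact mul_le_mul_of_nonneg_left h1 (sq_nonneg b)
      _ = τ * euclNorm (Γ.mulVec u) * b^2 := by ring

end Final

lemma stmt_eq {p : ℕ} (T : Fin p → Fin p → Fin p → ℝ) (u w : Fin p → ℝ) :
    w ⬝ᵥ ((∑ i, u i • Matrix.of fun j k : Fin p => T i j k).mulVec w) = S3 T u w w := by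
  unfold S3
  simp only [Matrix.mulVec, dotProduct, Matrix.sum_apply, Matrix.smul_apply, Matrix.of_apply,
    smul_eq_mul]
  have step : ∀ j, w j * ∑ k, (∑ i, u i * T i j k) * w k
      = ∑ k, ∑ i, T i j k * u i * w j * w k := by
    intro j
    rw [Finset.mul_sum]
    refine Finset.sum_congr rfl fun k _ => ?_
    rw [Finset.sum_mul, Finset.mul_sum]
    refine Finset.sum_congr rfl fun i _ => ?_
    ring
  calc ∑ j, w j * ∑ k, (∑ i, u i * T i j k) * w k
      = ∑ j, ∑ k, ∑ i, T i j k * u i * w j * w k := Finset.sum_congr rfl fun j _ => step j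
    _ = ∑ j, ∑ i, ∑ k, T i j k * u i * w j * w k :=
        Finset.sum_congr rfl fun j _ => Finset.sum_comm
    _ = ∑ i, ∑ j, ∑ k, T i j k * u i * w j * w k := Finset.sum_comm

/-- If the symmetric 3-tensor `T` satisfies condition (Γ), then for all
`u, w ∈ ℝ^p` it holds `|wᵀ T[u] w| ≤ τ ‖Γu‖ ‖Γw‖²` where `T[u] = ∑ i, u i • T_i`;
in particular `T[u] ≤ τ‖Γu‖ Γ²` in the sense of quadratic forms. -/
theorem tensor_slice_quadratic_form_bound
    (p : ℕ) (T : Fin p → Fin p → Fin p → ℝ)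
    (hsym : ∀ i j k, T i j k = T j i k ∧ T i j k = T i k j)
    (Γ : Matrix (Fin p) (Fin p) ℝ) (hΓ : Γ.IsSymm) (τ : ℝ) (hτ : 0 < τ)
    (hT : ∀ u : Fin p → ℝ,
      |∑ i, ∑ j, ∑ k, T i j k * u i * u j * u k| ≤ τ * euclNorm (Γ.mulVec u) ^ 3) :
    (∀ u w : Fin p → ℝ,
      |w ⬝ᵥ ((∑ i, u i • Matrix.of fun j k : Fin p => T i j k).mulVec w)|
        ≤ τ * euclNorm (Γ.mulVec u) * euclNorm (Γ.mulVec w) ^ 2) ∧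
    (∀ u w : Fin p → ℝ,
      w ⬝ᵥ ((∑ i, u i • Matrix.of fun j k : Fin p => T i j k).mulVec w)
        ≤ τ * euclNorm (Γ.mulVec u) * (w ⬝ᵥ ((Γ * Γ).mulVec w))) := by
  have hT' : ∀ v, |S3 T v v v| ≤ τ * euclNorm (Γ.mulVec v)^3 := hT
  have part1 : ∀ u w : Fin p → ℝ,
      |w ⬝ᵥ ((∑ i, u i • Matrix.of fun j k : Fin p => T i j k).mulVec w)|
        ≤ τ * euclNorm (Γ.mulVec u) * euclNorm (Γ.mulVec w) ^ 2 := by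
    intro u w
    rw [stmt_eq]
    exact general_case hsym Γ τ hτ hT' u w
  refine ⟨part1, ?_⟩
  intro u w
  have h1 := part1 u w
  have hvm : w ᵥ* Γ = Γ *ᵥ w := by rw [← Matrix.mulVec_transpose, hΓ.eq]
  have e : w ⬝ᵥ ((Γ * Γ).mulVec w) = euclNorm (Γ.mulVec w)^2 := by
    rw [← Matrix.mulVec_mulVec, Matrix.dotProduct_mulVec, hvm, ← euclNorm_sq_eq_dot]
  rw [e]
  exact le_trans (le_abs_self _) h1
end
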